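/- arXiv:2309.14748 — 6 statements merged into one kernel-verified Lean document; each statement's English description precedes it below -/
import Mathlib

section
/- Let b ≥ 2 and q be a prime not dividing b. For each k ∈ {1,2,...,q-1}, the set Z_k = {r ∈ (ℤ/(q(q-1))ℤ)^* : b^r ≡ kr + b (mod q)} has cardinality φ(q-1) − m_b(q), where m_b(q) = |{r ∈ (ℤ/(q-1)ℤ)^* : r ≡ 1 (mod ord_q(b))}| and ord_q(b) is the multiplicative order of b modulo q. -/
private lemma card_split {α : Type*} [Fintype α] (p q : α → Prop) [DecidablePred p]
    [DecidablePred q] :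
    Nat.card {x | p x ∧ q x} + Nat.card {x | p x ∧ ¬ q x} = Nat.card {x | p x} := by
  simp only [Set.coe_setOf, Nat.card_eq_fintype_card, Fintype.card_subtype]
  rw [show (Finset.univ.filter fun a => p a ∧ q a) = (Finset.univ.filter p).filter q by
        rw [Finset.filter_filter],
      show (Finset.univ.filter fun a => p a ∧ ¬ q a) = (Finset.univ.filter p).filter (¬ q ·) by
        rw [Finset.filter_filter]]
  exact Finset.card_filter_add_card_filter_not q

private lemma card_isUnit (n : ℕ) [NeZero n] :
    Nat.card {x : ZMod n | IsUnit x} = Nat.totient n := by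
  rw [← ZMod.card_units_eq_totient n, ← Nat.card_eq_fintype_card]
  exact Nat.card_congr (Equiv.symm ⟨fun u => ⟨u, u.isUnit⟩, fun x => x.2.unit,
    fun u => Units.ext u.isUnit.unit_spec, fun x => Subtype.ext x.2.unit_spec⟩)

private lemma isUnit_prod {M N : Type*} [Monoid M] [Monoid N] {a : M} {c : N}
    (ha : IsUnit a) (hc : IsUnit c) : IsUnit ((a, c) : M × N) :=
  ⟨MulEquiv.prodUnits.symm (ha.unit, hc.unit), by
    show ((ha.unit : M), (hc.unit : N)) = (a, c)
    rw [ha.unit_spec, hc.unit_spec]⟩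

theorem stmt_1 (b q : ℕ) (hb : 2 ≤ b) (hq : q.Prime) (hqb : ¬ q ∣ b)
    (k : ℕ) (hk1 : 1 ≤ k) (hk2 : k ≤ q - 1) :
    Nat.card {r : ZMod (q * (q - 1)) |
        IsUnit r ∧ (b : ZMod q) ^ r.val = (k : ZMod q) * (r.val : ZMod q) + (b : ZMod q)} =
      Nat.totient (q - 1) -
        Nat.card {r : ZMod (q - 1) |
          IsUnit r ∧ r.val ≡ 1 [MOD orderOf (b : ZMod q)]} := by
  classical
  have hq2 : 2 ≤ q := hq.two_le
  haveI : Fact q.Prime := ⟨hq⟩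
  haveI : NeZero (q - 1) := ⟨by omega⟩
  haveI : NeZero (q * (q - 1)) := ⟨Nat.mul_ne_zero (by omega) (by omega)⟩
  have hcop : Nat.Coprime q (q - 1) := by
    obtain ⟨m, hm⟩ : ∃ m, q = m + 1 := ⟨q - 1, by omega⟩
    subst hm
    rw [Nat.add_sub_cancel, Nat.Coprime, Nat.gcd_comm, Nat.add_comm, Nat.gcd_add_self_right,
      Nat.gcd_one_right]
  have hbq : (b : ZMod q) ≠ 0 := by
    rw [Ne, ZMod.natCast_eq_zero_iff]; exact hqb
  have hkq : (k : ZMod q) ≠ 0 := by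
    rw [Ne, ZMod.natCast_eq_zero_iff]
    intro hdvd
    have := Nat.le_of_dvd (by omega) hdvd
    omega
  have hb1 : (b : ZMod q) ^ (q - 1) = 1 := ZMod.pow_card_sub_one_eq_one hbq
  have hper : ∀ m : ℕ, (b : ZMod q) ^ m = (b : ZMod q) ^ (m % (q - 1)) := by
    intro m
    conv_lhs => rw [← Nat.div_add_mod m (q - 1)]
    rw [pow_add, pow_mul, hb1, one_pow, one_mul]
  have hbu : IsUnit (b : ZMod q) := hbq.isUnit
  have hpow_iff : ∀ m : ℕ, (b : ZMod q) ^ m = (b : ZMod q) ↔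
      m ≡ 1 [MOD orderOf (b : ZMod q)] := by
    intro m
    rw [show orderOf (b : ZMod q) = orderOf hbu.unit by rw [← orderOf_units, hbu.unit_spec]]
    rw [← pow_eq_pow_iff_modEq (x := hbu.unit) (n := m) (m := 1), pow_one]
    constructor
    · intro h; exact Units.ext (by simpa [hbu.unit_spec] using h)
    · intro h; simpa [hbu.unit_spec] using congrArg (Units.val) h
  set E := ZMod.chineseRemainder hcop with hEdef
  have hE : ∀ r : ZMod (q * (q - 1)), E r = ((r.val : ZMod q), (r.val : ZMod (q - 1))) := by
    intro r
    have h0 : E r = ZMod.castHom (show Nat.lcm q (q - 1) ∣ q * (q - 1) by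
        simp [Nat.lcm_dvd_iff]) (ZMod q × ZMod (q - 1)) r := rfl
    rw [h0, ZMod.castHom_apply, ← ZMod.natCast_val]
    rfl
  have hunit1 : ∀ r : ZMod (q * (q - 1)), IsUnit r → IsUnit ((r.val : ZMod q)) := by
    intro r hr
    have h1 := hr.map E
    rw [hE r] at h1
    exact h1.map (RingHom.fst (ZMod q) (ZMod (q - 1)))
  have hunit2 : ∀ r : ZMod (q * (q - 1)), IsUnit r → IsUnit ((r.val : ZMod (q - 1))) := by
    intro r hr
    have h1 := hr.map E
    rw [hE r] at h1
    exact h1.map (RingHom.snd (ZMod q) (ZMod (q - 1)))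
  have hpow2 : ∀ r : ZMod (q * (q - 1)),
      (b : ZMod q) ^ ((r.val : ZMod (q - 1)).val) = (b : ZMod q) ^ r.val := by
    intro r
    rw [ZMod.val_natCast, ← hper]
  have key : Nat.card {r : ZMod (q * (q - 1)) |
        IsUnit r ∧ (b : ZMod q) ^ r.val = (k : ZMod q) * (r.val : ZMod q) + (b : ZMod q)} =
      Nat.card {s : ZMod (q - 1) | IsUnit s ∧ (b : ZMod q) ^ s.val ≠ (b : ZMod q)} := by
    apply Nat.card_congr
    refine ⟨fun r => ⟨((r : ZMod (q * (q - 1))).val : ZMod (q - 1)), ?_, ?_⟩,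
      fun s => ⟨E.symm ((((b : ZMod q) ^ (s : ZMod (q - 1)).val - b) * (k : ZMod q)⁻¹,
        (s : ZMod (q - 1)))), ?_, ?_⟩, ?_, ?_⟩
    · exact hunit2 _ r.2.1
    · rw [hpow2]
      intro hcon
      have heq := r.2.2
      rw [hcon] at heq
      have : (k : ZMod q) * ((r : ZMod (q * (q - 1))).val : ZMod q) = 0 := by
        linear_combination -heq
      rcases mul_eq_zero.mp this with h | h
      · exact hkq h
      · exact (hunit1 _ r.2.1).ne_zero h
    · refine (IsUnit.map E.symm (isUnit_prod ?_ s.2.1))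
      exact isUnit_iff_ne_zero.mpr
        (mul_ne_zero (sub_ne_zero_of_ne s.2.2) (inv_ne_zero hkq))
    · -- equation for the preimage
      set t : ZMod q := ((b : ZMod q) ^ (s : ZMod (q - 1)).val - b) * (k : ZMod q)⁻¹ with htdef
      set r : ZMod (q * (q - 1)) := E.symm (t, (s : ZMod (q - 1))) with hrdef
      have hre : E r = (t, (s : ZMod (q - 1))) := E.apply_symm_apply _
      have hcomps := (hE r).symm.trans hre
      have hcomp1 : ((r.val : ZMod q)) = t := congrArg Prod.fst hcomps
      have hcomp2 : ((r.val : ZMod (q - 1))) = (s : ZMod (q - 1)) := congrArg Prod.snd hcomps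
      have hpr : (b : ZMod q) ^ r.val = (b : ZMod q) ^ (s : ZMod (q - 1)).val := by
        rw [← hpow2 r, hcomp2]
      rw [hpr, hcomp1, htdef, mul_comm ((k : ZMod q)), mul_assoc, inv_mul_cancel₀ hkq,
        mul_one, sub_add_cancel]
    · -- left inverse
      intro r
      apply Subtype.ext
      show E.symm (((b : ZMod q) ^ (((r : ZMod (q * (q - 1))).val : ZMod (q - 1))).val - b) *
          (k : ZMod q)⁻¹, ((r : ZMod (q * (q - 1))).val : ZMod (q - 1)))
        = (r : ZMod (q * (q - 1)))
      refine E.injective ?_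
      rw [RingEquiv.apply_symm_apply, hE, Prod.mk.injEq]
      refine ⟨?_, rfl⟩
      have heq := r.2.2
      rw [← hpow2] at heq
      rw [heq, add_sub_cancel_right, mul_comm ((k : ZMod q)), mul_assoc,
        mul_inv_cancel₀ hkq, mul_one]
    · -- right inverse
      intro s
      apply Subtype.ext
      have hcomps := (hE (E.symm (((b : ZMod q) ^ (s : ZMod (q - 1)).val - b) *
          (k : ZMod q)⁻¹, (s : ZMod (q - 1))))).symm.trans (E.apply_symm_apply _)
      exact congrArg Prod.snd hcomps
  rw [key]
  have hsum : Nat.card {s : ZMod (q - 1) | IsUnit s ∧ s.val ≡ 1 [MOD orderOf (b : ZMod q)]} +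
      Nat.card {s : ZMod (q - 1) | IsUnit s ∧ ¬ s.val ≡ 1 [MOD orderOf (b : ZMod q)]} =
      Nat.totient (q - 1) := by
    rw [← card_isUnit (q - 1)]
    exact card_split _ _
  have hseteq : {s : ZMod (q - 1) | IsUnit s ∧ (b : ZMod q) ^ s.val ≠ (b : ZMod q)} =
      {s : ZMod (q - 1) | IsUnit s ∧ ¬ s.val ≡ 1 [MOD orderOf (b : ZMod q)]} := by
    ext s
    simp only [Set.mem_setOf_eq, Ne, hpow_iff]
  rw [hseteq]
  omega
end

section
/- Let b ≥ 2 and q be a prime not dividing b. The set Z_0 = {r ∈ (ℤ/(q(q-1))ℤ)^* : b^r ≡ b (mod q)} has cardinality (q-1)·m_b(q), where m_b(q) = |{r ∈ (ℤ/(q-1)ℤ)^* : r ≡ 1 (mod ord_q(b))}|. -/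
lemma prod_isUnit_iff' {M N : Type*} [Monoid M] [Monoid N] (p : M × N) :
    IsUnit p ↔ IsUnit p.1 ∧ IsUnit p.2 := by
  constructor
  · rintro ⟨u, rfl⟩
    exact ⟨⟨⟨u.val.1, u.inv.1, congrArg Prod.fst u.val_inv, congrArg Prod.fst u.inv_val⟩, rfl⟩,
      ⟨⟨u.val.2, u.inv.2, congrArg Prod.snd u.val_inv, congrArg Prod.snd u.inv_val⟩, rfl⟩⟩
  · rintro ⟨⟨v, hv⟩, ⟨w, hw⟩⟩
    refine ⟨⟨(v.val, w.val), (v.inv, w.inv),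
      Prod.ext v.val_inv w.val_inv, Prod.ext v.inv_val w.inv_val⟩, ?_⟩
    exact Prod.ext hv hw

theorem stmt_2 (b q : ℕ) (hb : 2 ≤ b) (hq : q.Prime) (hqb : ¬ q ∣ b) :
    Nat.card {r : ZMod (q * (q - 1)) |
        IsUnit r ∧ (b : ZMod q) ^ r.val = (b : ZMod q)} =
      (q - 1) *
        Nat.card {r : ZMod (q - 1) |
          IsUnit r ∧ r.val ≡ 1 [MOD orderOf (b : ZMod q)]} := by
  have hq2 : 2 ≤ q := hq.two_le
  haveI : Fact q.Prime := ⟨hq⟩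
  haveI hne1 : NeZero (q - 1) := ⟨by omega⟩
  haveI hne : NeZero (q * (q - 1)) := ⟨by
    have : 0 < q * (q - 1) := Nat.mul_pos (by omega) (by omega)
    omega⟩
  have hcop : Nat.Coprime q (q - 1) :=
    (Nat.coprime_self_sub_right (by omega)).mpr (Nat.coprime_one_right q)
  set d := orderOf (b : ZMod q) with hd
  have hbq : Nat.Coprime b q := (hq.coprime_iff_not_dvd.mpr hqb).symm
  set u : (ZMod q)ˣ := ZMod.unitOfCoprime b hbq with hu
  have hub : (u : ZMod q) = (b : ZMod q) := ZMod.coe_unitOfCoprime b hbq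
  have hdu : orderOf u = d := by rw [hd, ← hub, orderOf_units]
  have hpow : ∀ n : ℕ, ((b : ZMod q) ^ n = (b : ZMod q) ↔ n ≡ 1 [MOD d]) := by
    intro n
    rw [← hub, ← hdu]
    constructor
    · intro h
      have h' : u ^ n = u ^ 1 := Units.ext (by simpa using h)
      exact pow_eq_pow_iff_modEq.mp h'
    · intro h
      have h' : u ^ n = u ^ 1 := pow_eq_pow_iff_modEq.mpr h
      simpa using congrArg Units.val h'
  have hb0 : (b : ZMod q) ≠ 0 := by
    simpa [ZMod.natCast_eq_zero_iff] using hqb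
  have hdvd : d ∣ q - 1 :=
    orderOf_dvd_of_pow_eq_one (ZMod.pow_card_sub_one_eq_one hb0)
  set e := ZMod.chineseRemainder hcop with he
  have he2 : ∀ r : ZMod (q * (q - 1)), ((e r).2).val = r.val % (q - 1) := by
    intro r
    have h1 : (e r).2 = ((r.val : ℕ) : ZMod (q - 1)) := by
      show (ZMod.castHom (show Nat.lcm q (q-1) ∣ q * (q - 1) by simp [Nat.lcm_dvd_iff]) (ZMod q × ZMod (q - 1)) r).2 = _
      rw [ZMod.castHom_apply, Prod.snd_zmod_cast]
      exact (ZMod.natCast_val r).symm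
    rw [h1, ZMod.val_natCast]
  have hcond : ∀ r : ZMod (q * (q - 1)),
      ((r.val ≡ 1 [MOD d]) ↔ ((e r).2).val ≡ 1 [MOD d]) := by
    intro r
    rw [he2]
    have hmm : r.val % (q - 1) ≡ r.val [MOD d] :=
      (Nat.mod_modEq r.val (q - 1)).of_dvd hdvd
    exact ⟨fun h => hmm.trans h, fun h => hmm.symm.trans h⟩
  have key : {r : ZMod (q * (q - 1)) |
        IsUnit r ∧ (b : ZMod q) ^ r.val = (b : ZMod q)} ≃
      {a : ZMod q // IsUnit a} ×
        {s : ZMod (q - 1) // IsUnit s ∧ s.val ≡ 1 [MOD d]} := by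
    refine (Equiv.subtypeEquiv e.toEquiv
      (q := fun c : ZMod q × ZMod (q - 1) =>
        IsUnit c.1 ∧ (IsUnit c.2 ∧ c.2.val ≡ 1 [MOD d])) ?_).trans
      (Equiv.subtypeProdEquivProd
        (p := fun a : ZMod q => IsUnit a)
        (q := fun s : ZMod (q - 1) => IsUnit s ∧ s.val ≡ 1 [MOD d]))
    intro r
    simp only [Set.mem_setOf_eq, hpow, hcond r, RingEquiv.toEquiv_eq_coe,
      EquivLike.coe_coe]
    constructor
    · rintro ⟨hr, h2⟩
      have h3 := (prod_isUnit_iff' (e r)).mp (hr.map e)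
      exact ⟨h3.1, h3.2, h2⟩
    · rintro ⟨h1, h2, h3⟩
      refine ⟨?_, h3⟩
      have h4 := ((prod_isUnit_iff' (e r)).mpr ⟨h1, h2⟩).map e.symm
      simpa using h4
  rw [Nat.card_congr key, Nat.card_prod]
  congr 1
  · -- number of units of ZMod q is q - 1
    have e1 : {a : ZMod q // IsUnit a} ≃ {a : ZMod q // a ≠ 0} :=
      Equiv.subtypeEquivRight fun a => isUnit_iff_ne_zero
    rw [Nat.card_congr (e1.trans unitsEquivNeZero.symm), Nat.card_eq_fintype_card,
      ZMod.card_units_eq_totient, Nat.totient_prime hq]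
end

section
/- Let R ∈ ℕ and S = (x_1,...,x_M) be a finite sequence taking values only in {k/R : k = 0,1,...,R-1}. Suppose |{n : x_n = k/R}| = α_k·M + ε_k where α_k ≥ 0, α_1 = α_2 = ... = α_{R-1}, and Σ_{k=0}^{R-1} α_k = 1. Then M·D*(S) ≤ max{α_0·M, M/R} + Σ_{k=0}^{R-1} |ε_k|, where D*(S) = sup_{r>0} | |{n : x_n ∈ [0,r]}|/M − r | is the star discrepancy. -/
open scoped Classical in
/-- Star discrepancy of a finite sequence `x : Fin M → ℝ`. -/
noncomputable def starDisc (M : ℕ) (x : Fin M → ℝ) : ℝ :=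
  ⨆ r : Set.Ioc (0 : ℝ) 1,
    |((Finset.univ.filter fun n => x n ≤ (r : ℝ)).card : ℝ) / M - (r : ℝ)|

/-! Let `j = min ⌊r R⌋ (R - 1)`, so that `j / R ≤ r ≤ (j + 1) / R`. The points `≤ r` are exactly
those equal to `k / R` with `k ≤ j`, so there are `(α₀ + j α₁) M + ∑_{k ≤ j} ε_k` of them. Since
`α₀ + (R - 1) α₁ = 1`, the affine function `g t = α₀ + t (α₁ - 1/R)` runs from `α₀` at `t = 0` to
`1/R` at `t = R - 1`; as `α₀ + j α₁ - r` lies between `g j - 1/R` and `g j`, its absolute value is at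
most `max α₀ (1/R)`. -/

open Finset

theorem Finset.sum_range_succ_eq_of_eq_one {M : Type*} [AddCommMonoid M] {f : ℕ → M} {n : ℕ}
    (hf : ∀ k, 1 ≤ k → k ≤ n → f k = f 1) :
    ∑ k ∈ range (n + 1), f k = f 0 + n • f 1 := by
  rw [sum_range_succ', sum_congr rfl fun k hk => hf (k + 1) (by omega) (by have := mem_range.1 hk; omega),
    sum_const, card_range, add_comm]

theorem Finset.card_filter_exists_eq_eq_sum {ι κ β : Type*} [Fintype ι] [DecidableEq ι]
    [DecidableEq β] (x : ι → β) {g : κ → β} (hg : Function.Injective g) (s : Finset κ) :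
    #{n | ∃ k ∈ s, x n = g k} = ∑ k ∈ s, #{n | x n = g k} := by
  rw [← card_biUnion]
  · congr 1; ext n; simp
  · intro k _ l _ hkl
    simp only [Function.onFun, disjoint_left, mem_filter, mem_univ, true_and]
    exact fun n hk hl => hkl (hg (hk.symm.trans hl))

theorem Nat.cast_le_iff_le_min_floor {t : ℝ} (ht : 0 ≤ t) {k R : ℕ} (hk : k < R) :
    (k : ℝ) ≤ t ↔ k ≤ min ⌊t⌋₊ (R - 1) := by
  rw [le_min_iff, ← Nat.le_floor_iff ht]
  omega

theorem Nat.min_floor_le_and_le_succ {t : ℝ} (ht : 0 ≤ t) {R : ℕ} (hR : 0 < R) (htR : t ≤ R) :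
    ((min ⌊t⌋₊ (R - 1) : ℕ) : ℝ) ≤ t ∧ t ≤ (min ⌊t⌋₊ (R - 1) : ℕ) + 1 := by
  rcases le_total ⌊t⌋₊ (R - 1) with h | h
  · rw [min_eq_left h]
    exact ⟨Nat.floor_le ht, (Nat.lt_floor_add_one t).le⟩
  · rw [min_eq_right h]
    refine ⟨(Nat.cast_le.2 h).trans (Nat.floor_le ht), ?_⟩
    rwa [Nat.cast_sub hR, Nat.cast_one, sub_add_cancel]

theorem card_filter_le_eq_sum_card_filter_eq {M R : ℕ} (hR : 0 < R) {x : Fin M → ℝ}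
    (hx : ∀ n, ∃ k < R, x n = (k : ℝ) / R) {r : ℝ} (hr : 0 ≤ r) :
    #{n | x n ≤ r} = ∑ k ∈ range (min ⌊r * R⌋₊ (R - 1) + 1), #{n | x n = (k : ℝ) / R} := by
  have hRpos : (0 : ℝ) < R := by exact_mod_cast hR
  have hinj : Function.Injective fun k : ℕ => (k : ℝ) / R :=
    fun k l hkl => Nat.cast_injective ((div_left_inj' hRpos.ne').1 hkl)
  rw [← card_filter_exists_eq_eq_sum x hinj]
  congr 1
  ext n
  obtain ⟨k, hk, hxk⟩ := hx n
  simp only [mem_filter, mem_univ, true_and, mem_range, hxk]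
  constructor
  · intro hkr
    refine ⟨k, ?_, rfl⟩
    rw [div_le_iff₀ hRpos, Nat.cast_le_iff_le_min_floor (by positivity) hk] at hkr
    omega
  · rintro ⟨l, hl, hkl⟩
    rw [hinj hkl, div_le_iff₀ hRpos, Nat.cast_le_iff_le_min_floor (by positivity) (by omega)]
    omega

theorem abs_add_mul_sub_le_max {a c j r N : ℝ} (ha : 0 ≤ a) (hN : 0 < N)
    (hsum : a + (N - 1) * c = 1) (hj0 : 0 ≤ j) (hjN : j ≤ N - 1)
    (hjr : j ≤ r * N) (hrj : r * N ≤ j + 1) :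
    |a + j * c - r| ≤ max a (1 / N) := by
  set g := a + j * (c - 1 / N)
  have hend : a + (N - 1) * (c - 1 / N) = 1 / N := by
    field_simp
    linear_combination N * hsum
  have hg : 0 ≤ g ∧ g ≤ max a (1 / N) := by
    have h1N : 0 < 1 / N := by positivity
    rcases le_total c (1 / N) with h | h
    · have : 1 / N ≤ g := by nlinarith [mul_nonneg (sub_nonneg.2 hjN) (sub_nonneg.2 h)]
      have : g ≤ a := by nlinarith [mul_nonneg hj0 (sub_nonneg.2 h)]
      exact ⟨by linarith, le_max_of_le_left this⟩
    · have : a ≤ g := by nlinarith [mul_nonneg hj0 (sub_nonneg.2 h)]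
      have : g ≤ 1 / N := by nlinarith [mul_nonneg (sub_nonneg.2 hjN) (sub_nonneg.2 h)]
      exact ⟨by linarith, le_max_of_le_right this⟩
  have hjr' : j / N ≤ r := by rwa [div_le_iff₀ hN]
  have hrj' : r ≤ j / N + 1 / N := by rwa [← add_div, le_div_iff₀ hN]
  rw [abs_le]
  constructor <;> nlinarith [le_max_right a (1 / N)]

theorem mul_starDisc_le {M : ℕ} {x : Fin M → ℝ} {C : ℝ} (hC : 0 ≤ C)
    (h : ∀ r : ℝ, 0 < r → r ≤ 1 → |(#{n | x n ≤ r} : ℝ) - r * M| ≤ C) :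
    M * starDisc M x ≤ C := by
  rcases Nat.eq_zero_or_pos M with rfl | hM
  · simpa using hC
  have hMpos : (0 : ℝ) < M := by exact_mod_cast hM
  rw [mul_comm, ← le_div_iff₀ hMpos]
  refine Real.iSup_le (fun r => ?_) (by positivity)
  rw [le_div_iff₀ hMpos]
  calc |(#{n | x n ≤ (r : ℝ)} : ℝ) / M - r| * M
      = |(#{n | x n ≤ (r : ℝ)} : ℝ) / M * M - r * M| := by
        rw [← sub_mul, abs_mul, abs_of_pos hMpos]
    _ ≤ C := by
        rw [div_mul_cancel₀ _ hMpos.ne']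
        exact h r r.2.1 r.2.2

theorem stmt_4 (R M : ℕ) (hR : 0 < R) (x : Fin M → ℝ)
    (hx : ∀ n, ∃ k < R, x n = (k : ℝ) / R)
    (α ε : ℕ → ℝ) (hα : ∀ k < R, 0 ≤ α k)
    (hαconst : ∀ k, 1 ≤ k → k < R → α k = α 1)
    (hsum : ∑ k ∈ Finset.range R, α k = 1)
    (hcount : ∀ k < R,
      ((Finset.univ.filter fun n => x n = (k : ℝ) / R).card : ℝ) = α k * M + ε k) :
    (M : ℝ) * starDisc M x ≤
      max (α 0 * M) ((M : ℝ) / R) + ∑ k ∈ Finset.range R, |ε k| := by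
  have hRpos : (0 : ℝ) < R := by exact_mod_cast hR
  have hα_partial (j : ℕ) (hj : j < R) : ∑ k ∈ range (j + 1), α k = α 0 + j * α 1 := by
    rw [sum_range_succ_eq_of_eq_one fun k hk hkj => hαconst k hk (by omega), nsmul_eq_mul]
  have hα_total : α 0 + ((R : ℝ) - 1) * α 1 = 1 := by
    have := hα_partial (R - 1) (by omega)
    rwa [Nat.sub_add_cancel hR, hsum, Nat.cast_sub hR, Nat.cast_one, eq_comm] at this
  refine mul_starDisc_le (by positivity) fun r hr0 hr1 => ?_
  set j := min ⌊r * R⌋₊ (R - 1)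
  have hjR : j < R := by omega
  obtain ⟨hjr, hrj⟩ := Nat.min_floor_le_and_le_succ (t := r * R) (by positivity) hR (by nlinarith)
  have hcard : (#{n | x n ≤ r} : ℝ) = (α 0 + j * α 1) * M + ∑ k ∈ range (j + 1), ε k := by
    rw [card_filter_le_eq_sum_card_filter_eq hR hx hr0.le, Nat.cast_sum,
      sum_congr rfl fun k hk => hcount k (by have := mem_range.1 hk; omega), sum_add_distrib, ← sum_mul,
      hα_partial j hjR]
  calc |(#{n | x n ≤ r} : ℝ) - r * M|
      = |(α 0 + j * α 1 - r) * M + ∑ k ∈ range (j + 1), ε k| := by rw [hcard]; ring_nf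
    _ ≤ |α 0 + j * α 1 - r| * M + ∑ k ∈ range (j + 1), |ε k| := by
        grw [abs_add_le, abs_mul, Nat.abs_cast M, abs_sum_le_sum_abs]
    _ ≤ max (α 0) (1 / R) * M + ∑ k ∈ range R, |ε k| := by
        gcongr
        · exact abs_add_mul_sub_le_max (hα 0 hR) hRpos hα_total (Nat.cast_nonneg j)
            (by rw [le_sub_iff_add_le]; exact_mod_cast hjR) hjr hrj
        · omega
    _ = max (α 0 * M) (M / R) + ∑ k ∈ range R, |ε k| := by
        rw [max_mul_of_nonneg _ _ (Nat.cast_nonneg M), one_div_mul_eq_div]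
end

section
/- Let S' = (x_1,...,x_M) and S'' = (y_1,...,y_M) be finite sequences in [0,1] with |x_j − y_j| ≤ ε for all j. Then |D*(S') − D*(S'')| ≤ ε, where D* denotes star discrepancy. -/
open scoped Classical in
private lemma starDisc_bdd (M : ℕ) (x : Fin M → ℝ) :
    BddAbove (Set.range fun r : Set.Ioc (0 : ℝ) 1 =>
      |((Finset.univ.filter fun n => x n ≤ (r : ℝ)).card : ℝ) / M - (r : ℝ)|) := by
  refine ⟨2, ?_⟩
  rintro v ⟨r, rfl⟩
  have hr := r.2
  have hcard : ((Finset.univ.filter fun n => x n ≤ (r : ℝ)).card : ℝ) ≤ M := by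
    exact_mod_cast Finset.card_le_card (Finset.filter_subset _ _) |>.trans
      (le_of_eq (Finset.card_univ.trans (Fintype.card_fin M)))
  have h0 : (0 : ℝ) ≤ ((Finset.univ.filter fun n => x n ≤ (r : ℝ)).card : ℝ) := by positivity
  have hdiv : ((Finset.univ.filter fun n => x n ≤ (r : ℝ)).card : ℝ) / M ≤ 1 := by
    rcases Nat.eq_zero_or_pos M with h | h
    · simp [h]
    · rw [div_le_one (by exact_mod_cast h)]; exact hcard
  have hdiv0 : (0 : ℝ) ≤ ((Finset.univ.filter fun n => x n ≤ (r : ℝ)).card : ℝ) / M := by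
    positivity
  rw [abs_le]
  constructor <;> [skip; skip] <;>
    · have h1 := hr.1; have h2 := hr.2; linarith

open scoped Classical in
private lemma starDisc_nonneg (M : ℕ) (y : Fin M → ℝ) : 0 ≤ starDisc M y := by
  have := le_ciSup (starDisc_bdd M y) (⟨1, by norm_num⟩ : Set.Ioc (0 : ℝ) 1)
  exact le_trans (abs_nonneg _) this

open scoped Classical in
private lemma starDisc_le (M : ℕ) (hM : 0 < M) (x y : Fin M → ℝ)
    (hx : ∀ j, x j ∈ Set.Icc (0 : ℝ) 1) (hy : ∀ j, y j ∈ Set.Icc (0 : ℝ) 1)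
    (ε : ℝ) (hε : ∀ j, |x j - y j| ≤ ε) :
    starDisc M x ≤ starDisc M y + ε := by
  have hε0 : 0 ≤ ε := le_trans (abs_nonneg _) (hε ⟨0, hM⟩)
  have hMR : (0 : ℝ) < M := by exact_mod_cast hM
  apply ciSup_le
  rintro ⟨r, hr⟩
  dsimp only
  rw [abs_sub_le_iff]
  constructor
  · -- upper bound: Cx(r)/M - r ≤ D(y) + ε
    set s : ℝ := min (r + ε) 1 with hs
    have hsmem : s ∈ Set.Ioc (0 : ℝ) 1 :=
      ⟨lt_min (by linarith [hr.1]) one_pos, min_le_right _ _⟩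
    have hsub : (Finset.univ.filter fun n => x n ≤ r) ⊆
        (Finset.univ.filter fun n => y n ≤ s) := by
      intro n hn
      simp only [Finset.mem_filter, Finset.mem_univ, true_and] at hn ⊢
      have h1 : y n - x n ≤ ε := le_trans (le_abs_self _ |>.trans (by rw [abs_sub_comm])) (hε n)
      exact le_min (by linarith) (hy n).2
    have hcard : ((Finset.univ.filter fun n => x n ≤ r).card : ℝ) ≤
        ((Finset.univ.filter fun n => y n ≤ s).card : ℝ) := by
      exact_mod_cast Finset.card_le_card hsub
    have hsup := le_ciSup (starDisc_bdd M y) (⟨s, hsmem⟩ : Set.Ioc (0 : ℝ) 1)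
    have habs : ((Finset.univ.filter fun n => y n ≤ s).card : ℝ) / M - s ≤ starDisc M y :=
      le_trans (le_abs_self _) hsup
    have hsr : s - r ≤ ε := by
      have := min_le_left (r + ε) 1; linarith
    have hdivle : ((Finset.univ.filter fun n => x n ≤ r).card : ℝ) / M ≤
        ((Finset.univ.filter fun n => y n ≤ s).card : ℝ) / M :=
      div_le_div_of_nonneg_right hcard hMR.le |>.trans_eq rfl
    linarith
  · -- lower bound: r - Cx(r)/M ≤ D(y) + ε
    rcases le_or_gt r ε with h | h
    · have h0 : (0 : ℝ) ≤ ((Finset.univ.filter fun n => x n ≤ r).card : ℝ) / M := by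
        positivity
      linarith [starDisc_nonneg M y]
    · set s : ℝ := r - ε with hs
      have hsmem : s ∈ Set.Ioc (0 : ℝ) 1 := ⟨by linarith, by linarith [hr.2]⟩
      have hsub : (Finset.univ.filter fun n => y n ≤ s) ⊆
          (Finset.univ.filter fun n => x n ≤ r) := by
        intro n hn
        simp only [Finset.mem_filter, Finset.mem_univ, true_and] at hn ⊢
        have h1 : x n - y n ≤ ε := le_trans (le_abs_self _) (hε n)
        linarith
      have hcard : ((Finset.univ.filter fun n => y n ≤ s).card : ℝ) ≤
          ((Finset.univ.filter fun n => x n ≤ r).card : ℝ) := by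
        exact_mod_cast Finset.card_le_card hsub
      have hsup := le_ciSup (starDisc_bdd M y) (⟨s, hsmem⟩ : Set.Ioc (0 : ℝ) 1)
      have habs : s - ((Finset.univ.filter fun n => y n ≤ s).card : ℝ) / M ≤ starDisc M y :=
        le_trans (neg_le_abs _ |>.trans_eq' (by ring_nf)) hsup
      have hdivle : ((Finset.univ.filter fun n => y n ≤ s).card : ℝ) / M ≤
          ((Finset.univ.filter fun n => x n ≤ r).card : ℝ) / M :=
        div_le_div_of_nonneg_right hcard hMR.le
      linarith

theorem stmt_6 (M : ℕ) (hM : 0 < M) (x y : Fin M → ℝ)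
    (hx : ∀ j, x j ∈ Set.Icc (0 : ℝ) 1) (hy : ∀ j, y j ∈ Set.Icc (0 : ℝ) 1)
    (ε : ℝ) (hε : ∀ j, |x j - y j| ≤ ε) :
    |starDisc M x - starDisc M y| ≤ ε := by
  rw [abs_sub_le_iff]
  constructor
  · linarith [starDisc_le M hM x y hx hy ε hε]
  · have hε' : ∀ j, |y j - x j| ≤ ε := fun j => by rw [abs_sub_comm]; exact hε j
    linarith [starDisc_le M hM y x hy hx ε hε']
end

section
/- Let b ≥ 2 and A = {pq : p, q primes, p > b^q}. Then the set S_b(A) = {(b^n mod n)/n : n ∈ A} is dense in [0,1]. -/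
/-! Fix a prime `q > b²` and `0 < k < q`. Dirichlet's theorem for the modulus `(q - 1) q` gives a
prime `p > b ^ q` with `p ≡ -1 [MOD q - 1]` and `p k ≡ b⁻¹ - b` modulo `q` (a unit, as `q` divides
neither `b` nor `b² - 1`). By Fermat, `b ^ (p q) ≡ b ^ q` modulo `p` and
`b ^ (p q) ≡ b ^ p ≡ b⁻¹ ≡ b ^ q + k p` modulo `q`; since `b ^ q + k p < p q`, this is the residue
of `b ^ (p q)` modulo `p q`, and divided by `p q` it lies in `[k / q, (k + 1) / q)`;
these intervals cover `[0, 1]` up to `1 / q`. -/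

theorem Nat.forall_exists_prime_gt_and_eq_mod_and_eq_mod {m n : ℕ} [NeZero m] [NeZero n]
    (hmn : m.Coprime n) {u : ZMod m} {v : ZMod n} (hu : IsUnit u) (hv : IsUnit v) (N : ℕ) :
    ∃ p > N, p.Prime ∧ (p : ZMod m) = u ∧ (p : ZMod n) = v := by
  let e := ZMod.chineseRemainder hmn
  have hw : IsUnit (e.symm (u, v)) := (Prod.isUnit_iff.mpr ⟨hu, hv⟩).map e.symm
  obtain ⟨p, hpN, hp, hpw⟩ := Nat.forall_exists_prime_gt_and_eq_mod hw N
  have hpuv : ((p : ZMod m), (p : ZMod n)) = (u, v) := by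
    rw [← e.apply_symm_apply (u, v), ← hpw, map_natCast]
    rfl
  exact ⟨p, hpN, hp, congrArg Prod.fst hpuv, congrArg Prod.snd hpuv⟩

namespace ZMod

variable {p : ℕ} [Fact p.Prime]

theorem pow_card_mul (x : ZMod p) (n : ℕ) : x ^ (p * n) = x ^ n := by
  rw [pow_mul, pow_card]

theorem pow_mul_card_eq_inv {x : ZMod p} (hx : x ≠ 0) {n : ℕ} (hn : p - 1 ∣ n + 1) :
    x ^ (n * p) = x⁻¹ := by
  rw [pow_mul, pow_card]
  refine eq_inv_of_mul_eq_one_left ?_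
  obtain ⟨t, ht⟩ := hn
  rw [← pow_succ, ht, pow_mul, pow_card_sub_one_eq_one hx, one_pow]

end ZMod

theorem pow_mul_mod_mul_eq {b p q k : ℕ} (hp : p.Prime) (hq : q.Prime) (hpq : p ≠ q)
    (hbp : b ^ q < p) (hkq : k < q) (hb : (b : ZMod q) ≠ 0) (hp_succ : q - 1 ∣ p + 1)
    (hpk : (p * k : ZMod q) = (b : ZMod q)⁻¹ - b) :
    b ^ (p * q) % (p * q) = b ^ q + k * p := by
  have := Fact.mk hp
  have := Fact.mk hq
  have hlt : b ^ q + k * p < p * q := by nlinarith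
  rw [← Nat.mod_eq_of_lt hlt]
  refine (Nat.modEq_and_modEq_iff_modEq_mul ((Nat.coprime_primes hp hq).mpr hpq)).mp ⟨?_, ?_⟩
  · rw [← ZMod.natCast_eq_natCast_iff]
    push_cast
    rw [ZMod.pow_card_mul, ZMod.natCast_self, mul_zero, add_zero]
  · rw [← ZMod.natCast_eq_natCast_iff]
    push_cast
    rw [ZMod.pow_mul_card_eq_inv hb hp_succ, ZMod.pow_card, mul_comm (k : ZMod q), hpk]
    ring

theorem exists_prime_pow_mul_mod_mul_eq {b q k : ℕ} (hb : 2 ≤ b) (hq : q.Prime) (hbq : b ^ 2 < q)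
    (hk : 0 < k) (hkq : k < q) :
    ∃ p, p.Prime ∧ b ^ q < p ∧ b ^ (p * q) % (p * q) = b ^ q + k * p := by
  have := Fact.mk hq
  have hb0 : (b : ZMod q) ≠ 0 := by
    rw [Ne, ZMod.natCast_eq_zero_iff]
    exact Nat.not_dvd_of_pos_of_lt (by omega) (by nlinarith)
  have hk0 : (k : ZMod q) ≠ 0 := by
    rw [Ne, ZMod.natCast_eq_zero_iff]
    exact Nat.not_dvd_of_pos_of_lt hk hkq
  have hb_inv : (b : ZMod q)⁻¹ ≠ b := by
    intro h
    have hb2 : 1 < b ^ 2 := Nat.one_lt_pow two_ne_zero (by omega)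
    have hsq : ((b ^ 2 - 1 : ℕ) : ZMod q) = 0 := by
      rw [Nat.cast_sub hb2.le, Nat.cast_pow, Nat.cast_one]
      calc (b : ZMod q) ^ 2 - 1 = (b : ZMod q)⁻¹ * b - 1 := by rw [h, sq]
        _ = 0 := by rw [inv_mul_cancel₀ hb0, sub_self]
    rw [ZMod.natCast_eq_zero_iff] at hsq
    exact Nat.not_dvd_of_pos_of_lt (Nat.sub_pos_of_lt hb2) (by omega) hsq
  have hc : IsUnit (((b : ZMod q)⁻¹ - b) / k) :=
    (div_ne_zero (sub_ne_zero.mpr hb_inv) hk0).isUnit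
  have : NeZero (q - 1) := ⟨by have := hq.two_le; omega⟩
  obtain ⟨p, hbp, hp, hp_neg, hpc⟩ := Nat.forall_exists_prime_gt_and_eq_mod_and_eq_mod
    ((Nat.coprime_self_sub_left hq.one_le).mpr (Nat.coprime_one_left q)) isUnit_one.neg hc (b ^ q)
  have hqp : q < p := (Nat.lt_pow_self (by omega)).trans_le (Nat.pow_le_pow_left hb q) |>.trans hbp
  have hdvd : q - 1 ∣ p + 1 := by
    rw [← ZMod.natCast_eq_zero_iff, Nat.cast_add, hp_neg, Nat.cast_one, neg_add_cancel]
  refine ⟨p, hp, hbp, pow_mul_mod_mul_eq hp hq hqp.ne' hbp hkq hb0 hdvd ?_⟩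
  rw [hpc, div_mul_cancel₀ _ hk0]

theorem dist_natCast_add_mul_div_mul_lt {s k p q : ℕ} (hs : s < p) (hq : 0 < q) :
    dist (((s + k * p : ℕ) : ℝ) / ((p * q : ℕ) : ℝ)) (k / q) < 1 / q := by
  have hp : (0 : ℝ) < p := by exact_mod_cast hs.pos
  have hq' : (0 : ℝ) < q := by exact_mod_cast hq
  have hs' : (s : ℝ) < p := by exact_mod_cast hs
  have hdiff : ((s + k * p : ℕ) : ℝ) / ((p * q : ℕ) : ℝ) - k / q = s / (p * q) := by
    push_cast
    field_simp
    ring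
  rw [Real.dist_eq, hdiff, abs_of_nonneg (by positivity), div_lt_div_iff₀ (by positivity) hq']
  nlinarith

theorem exists_dist_div_le {x : ℝ} (hx : x ∈ Set.Icc (0 : ℝ) 1) {q : ℕ} (hq : 2 ≤ q) :
    ∃ k, 0 < k ∧ k < q ∧ dist x (k / q) ≤ 1 / q := by
  have hq' : (0 : ℝ) < q := by positivity
  suffices ∃ k, 0 < k ∧ k < q ∧ |x * q - k| ≤ 1 by
    obtain ⟨k, hk0, hkq, hk⟩ := this
    refine ⟨k, hk0, hkq, ?_⟩
    rwa [Real.dist_eq, ← mul_div_cancel_right₀ x hq'.ne', ← sub_div, abs_div, abs_of_pos hq',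
      div_le_div_iff_of_pos_right hq']
  obtain ⟨hx0, hx1⟩ := hx
  by_cases hxq : x * q ≤ 1
  · exact ⟨1, one_pos, hq, by rw [abs_le]; constructor <;> push_cast <;> nlinarith⟩
  · have hceil_le : ⌈x * q⌉₊ ≤ q := Nat.ceil_le.mpr (by nlinarith)
    have hceil_gt : 1 < ⌈x * q⌉₊ := Nat.lt_ceil.mpr (by push_cast; linarith)
    refine ⟨⌈x * q⌉₊ - 1, by omega, by omega, ?_⟩
    have := Nat.le_ceil (x * q)
    have := Nat.ceil_lt_add_one (by positivity : 0 ≤ x * q)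
    rw [abs_le, Nat.cast_sub hceil_gt.le, Nat.cast_one]
    constructor <;> linarith

theorem stmt_18 (b : ℕ) (hb : 2 ≤ b) :
    ∀ x ∈ Set.Icc (0 : ℝ) 1,
      x ∈ closure {y : ℝ | ∃ p q : ℕ, p.Prime ∧ q.Prime ∧ b ^ q < p ∧
        y = ((b ^ (p * q) % (p * q) : ℕ) : ℝ) / ((p * q : ℕ) : ℝ)} := by
  intro x hx
  rw [Metric.mem_closure_iff]
  intro ε hε
  obtain ⟨q, hq_ge, hq⟩ := Nat.exists_infinite_primes (max (b ^ 2 + 1) (⌈2 / ε⌉₊ + 1))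
  rw [max_le_iff] at hq_ge
  have hbq : b ^ 2 < q := by omega
  have hqε : 2 / (q : ℝ) < ε :=
    (div_lt_comm₀ (by exact_mod_cast hq.pos) hε).mpr (Nat.lt_of_ceil_lt (by omega))
  obtain ⟨k, hk, hkq, hxk⟩ := exists_dist_div_le hx (show 2 ≤ q by nlinarith)
  obtain ⟨p, hp, hbp, hmod⟩ := exists_prime_pow_mul_mod_mul_eq hb hq hbq hk hkq
  refine ⟨_, ⟨p, q, hp, hq, hbp, rfl⟩, ?_⟩
  rw [hmod]
  calc dist x _ ≤ dist x (k / q) + dist (k / q : ℝ) _ := dist_triangle _ _ _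
    _ < 1 / q + 1 / q :=
        add_lt_add_of_le_of_lt hxk (dist_comm (α := ℝ) _ _ ▸ dist_natCast_add_mul_div_mul_lt hbp hq.pos)
    _ = 2 / q := by ring
    _ < ε := hqε
end

section
/- Assume the Siegel–Walfisz type estimate π(x; q(q-1), r) = π(x)/φ(q(q-1)) + O(x/(log x)^4) holds uniformly in r coprime to q(q-1). Let b ≥ 2, q prime with q ∤ b, N > q·b^q, F_{q,N} = {p prime : b^q < p ≤ N/q}, and F_k = {p ∈ F_{q,N} : ∃ r ∈ Z_k with p ≡ r (mod q(q-1))}. Then |F_k| = (|Z_k|/φ(q(q-1)))·|F_{q,N}| + ε_k with Σ_{k=0}^{q-1} |ε_k| ≤ C·N/(q²·log N) for an absolute constant C. -/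
/-- Counting function for primes `p ≤ x` with `p ≡ r (mod m)`. -/
noncomputable def primePiMod (x : ℝ) (m r : ℕ) : ℕ :=
  Nat.card {p : ℕ | p.Prime ∧ (p : ℝ) ≤ x ∧ p % m = r % m}

/-- Counting function for primes `p ≤ x`. -/
noncomputable def primePi (x : ℝ) : ℕ := Nat.card {p : ℕ | p.Prime ∧ (p : ℝ) ≤ x}

/-!
For a unit residue `r` modulo `m = q(q-1)`, the primes `p` with `b^q < p ≤ N/q` and `p ≡ r`
number `π(N/q; m, r) - π(b^q; m, r)`, while `|F_{q,N}| = π(N/q) - π(b^q)`. Hence `ε_k` is a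
sum, over `r ∈ Z_k`, of differences of two Siegel–Walfisz errors, at `x = N/q` and `x = b^q`.
A unit `r` determines `k` modulo `q` through `b^r ≡ kr + b`, so the `Z_k` with `k < q` are
disjoint and `∑ |Z_k| ≤ m ≤ q²`. It remains to see that both `q² · (N/q) / log⁴(N/q)` and
`q² · b^q / log⁴(b^q)` are `O(N / (q² log N))`; for the first, `log (N/q)` is at least both
`q log 2` and `(log N) / 2`.
-/

open Finset Real

noncomputable def primesLE (x : ℝ) : Finset ℕ := (Iic ⌊x⌋₊).filter Nat.Prime

@[simp]
lemma mem_primesLE {x : ℝ} {p : ℕ} : p ∈ primesLE x ↔ p.Prime ∧ (p : ℝ) ≤ x := by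
  simp only [primesLE, mem_filter, mem_Iic]
  exact ⟨fun ⟨h, hp⟩ => ⟨hp, (Nat.le_floor_iff' hp.ne_zero).mp h⟩,
    fun ⟨hp, h⟩ => ⟨(Nat.le_floor_iff' hp.ne_zero).mpr h, hp⟩⟩

lemma primesLE_mono {x y : ℝ} (h : x ≤ y) : primesLE x ⊆ primesLE y := fun _ hp => by
  rw [mem_primesLE] at hp ⊢
  exact ⟨hp.1, hp.2.trans h⟩

lemma primePi_eq_card (x : ℝ) : primePi x = #(primesLE x) := by
  rw [primePi, Nat.card_coe_set_eq, ← Set.ncard_coe_finset]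
  congr 1; ext; simp

lemma primePiMod_eq_card {m : ℕ} [NeZero m] (x : ℝ) (r : ZMod m) :
    primePiMod x m r.val = #((primesLE x).filter fun p : ℕ => (p : ZMod m) = r) := by
  rw [primePiMod, Nat.card_coe_set_eq, ← Set.ncard_coe_finset]
  congr 1; ext p
  simp [← ZMod.natCast_eq_natCast_iff', and_assoc]

lemma card_setOf_prime_lt_le_and (n : ℕ) (x : ℝ) (P : ℕ → Prop) [DecidablePred P] :
    Nat.card {p : ℕ | p.Prime ∧ n < p ∧ (p : ℝ) ≤ x ∧ P p} =
      #((primesLE x \ primesLE n).filter P) := by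
  rw [Nat.card_coe_set_eq, ← Set.ncard_coe_finset]
  congr 1; ext p
  simp only [Set.mem_ofPred_eq, coe_filter, mem_sdiff, mem_primesLE, Nat.cast_le, not_and,
    not_le]
  tauto

lemma card_setOf_prime_lt_le (n : ℕ) (x : ℝ) :
    Nat.card {p : ℕ | p.Prime ∧ n < p ∧ (p : ℝ) ≤ x} = #(primesLE x \ primesLE n) := by
  simpa using card_setOf_prime_lt_le_and n x fun _ => True

lemma card_filter_mem_eq_sum {α β : Type*} [DecidableEq β] (s : Finset α) (f : α → β)
    (Z : Finset β) :
    #(s.filter fun a => f a ∈ Z) = ∑ r ∈ Z, #(s.filter fun a => f a = r) := by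
  refine (card_eq_sum_card_fiberwise (f := f) fun a ha => (mem_filter.mp ha).2).trans ?_
  refine sum_congr rfl fun r hr => ?_
  rw [filter_filter]
  exact congrArg card (filter_congr fun a _ => ⟨And.right, fun h => ⟨h ▸ hr, h⟩⟩)

lemma card_filter_sdiff_sub_eq_sum {α β : Type*} [DecidableEq α] [DecidableEq β]
    {S T : Finset α} (hST : S ⊆ T) (f : α → β) (Z : Finset β) (t : ℝ) :
    (#((T \ S).filter fun a => f a ∈ Z) : ℝ) - #Z / t * #(T \ S) =
      ∑ r ∈ Z, (((#(T.filter fun a => f a = r) : ℝ) - #T / t) -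
        ((#(S.filter fun a => f a = r) : ℝ) - #S / t)) := by
  have hfiber (r : β) : (#((T \ S).filter fun a => f a = r) : ℝ) =
      #(T.filter fun a => f a = r) - #(S.filter fun a => f a = r) := by
    have hsub := filter_subset_filter (fun a => f a = r) hST
    have hsdiff : (T \ S).filter (f · = r) = T.filter (f · = r) \ S.filter (f · = r) := by
      ext; simp only [mem_filter, mem_sdiff]; tauto
    rw [hsdiff, card_sdiff_of_subset hsub, Nat.cast_sub (card_le_card hsub)]
  rw [card_filter_mem_eq_sum, Nat.cast_sum, card_sdiff_of_subset hST,
    Nat.cast_sub (card_le_card hST), sum_congr rfl fun r _ => hfiber r]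
  simp only [sum_sub_distrib, sum_const, nsmul_eq_mul]
  ring

lemma abs_card_filter_primes_sub_le {m : ℕ} [NeZero m] (Q : ZMod m → Prop) [DecidablePred Q]
    {B X EB EX t : ℝ} (hBX : B ≤ X)
    (hX : ∀ r, Q r → |(primePiMod X m r.val : ℝ) - primePi X / t| ≤ EX)
    (hB : ∀ r, Q r → |(primePiMod B m r.val : ℝ) - primePi B / t| ≤ EB) :
    |(#((primesLE X \ primesLE B).filter fun p : ℕ => Q p) : ℝ) -
        #(univ.filter Q) / t * #(primesLE X \ primesLE B)| ≤ #(univ.filter Q) * (EX + EB) := by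
  have hfilter : ((primesLE X \ primesLE B).filter fun p : ℕ => Q p) =
      (primesLE X \ primesLE B).filter fun p : ℕ => (p : ZMod m) ∈ univ.filter Q := by simp
  rw [hfilter, card_filter_sdiff_sub_eq_sum (primesLE_mono hBX)]
  refine (abs_sum_le_sum_abs _ _).trans ?_
  rw [← nsmul_eq_mul, ← sum_const]
  refine sum_le_sum fun r hr => ?_
  have hr : Q r := (mem_filter.mp hr).2
  have hXr := hX r hr
  have hBr := hB r hr
  rw [primePiMod_eq_card, primePi_eq_card] at hXr hBr
  exact (abs_sub _ _).trans (add_le_add hXr hBr)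

lemma sum_card_isUnit_eq_mul_add_le {m q : ℕ} [NeZero m] (hqm : q ∣ m) (g : ZMod m → ZMod q)
    (c : ZMod q) :
    ∑ k ∈ range q, #(univ.filter fun r : ZMod m =>
      IsUnit r ∧ g r = (k : ZMod q) * (r.val : ZMod q) + c) ≤ m := by
  rw [← card_biUnion]
  · exact (card_le_univ _).trans (ZMod.card m).le
  intro k hk l hl hkl
  refine disjoint_left.mpr fun r hrk hrl => hkl ?_
  simp only [mem_filter, mem_univ, true_and] at hrk hrl
  have hcoprime : r.val.Coprime m :=
    (ZMod.isUnit_iff_coprime _ _).mp (by rw [ZMod.natCast_zmod_val]; exact hrk.1)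
  have hunit : IsUnit (r.val : ZMod q) :=
    (ZMod.isUnit_iff_coprime _ _).mpr (hcoprime.coprime_dvd_right hqm)
  have hkl : (k : ZMod q) = l :=
    hunit.mul_right_cancel (add_right_cancel (hrk.2.symm.trans hrl.2))
  rwa [ZMod.natCast_eq_natCast_iff', Nat.mod_eq_of_lt (mem_range.mp hk),
    Nat.mod_eq_of_lt (mem_range.mp hl)] at hkl

lemma sum_abs_card_filter_primes_sub_le {m q b : ℕ} [NeZero m] (hqm : q ∣ m)
    {B X EB EX t : ℝ} (hBX : B ≤ X)
    (hX : ∀ r : ZMod m, IsUnit r → |(primePiMod X m r.val : ℝ) - primePi X / t| ≤ EX)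
    (hB : ∀ r : ZMod m, IsUnit r → |(primePiMod B m r.val : ℝ) - primePi B / t| ≤ EB) :
    ∑ k ∈ range q, |(#((primesLE X \ primesLE B).filter fun p : ℕ => IsUnit (p : ZMod m) ∧
          (b : ZMod q) ^ (p : ZMod m).val = (k : ZMod q) * ((p : ZMod m).val : ZMod q) + b) : ℝ) -
        #(univ.filter fun r : ZMod m =>
          IsUnit r ∧ (b : ZMod q) ^ r.val = (k : ZMod q) * (r.val : ZMod q) + b) / t *
        #(primesLE X \ primesLE B)| ≤ m * (EX + EB) := by
  refine (sum_le_sum fun (k : ℕ) _ => abs_card_filter_primes_sub_le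
    (fun r : ZMod m => IsUnit r ∧ (b : ZMod q) ^ r.val = (k : ZMod q) * r.val + b) hBX
    (fun r hr => hX r hr.1) (fun r hr => hB r hr.1)).trans ?_
  rw [← sum_mul]
  refine mul_le_mul_of_nonneg_right ?_
    (add_nonneg ((abs_nonneg _).trans (hX 1 isUnit_one)) ((abs_nonneg _).trans (hB 1 isUnit_one)))
  exact_mod_cast sum_card_isUnit_eq_mul_add_le hqm (fun r : ZMod m => (b : ZMod q) ^ r.val) b

lemma log_two_pow_three_gt : (0.3 : ℝ) < log 2 ^ 3 := by
  have := log_two_gt_d9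
  nlinarith [pow_le_pow_left₀ (by norm_num) this.le 3]

lemma sq_mul_div_log_pow_four_le {q : ℕ} {N : ℝ} (hq : 1 ≤ q) (h2q : (2 : ℝ) ^ q ≤ N / q)
    (hqN : (q : ℝ) ≤ N / q) :
    (q : ℝ) ^ 2 * (N / q / log (N / q) ^ 4) ≤ 7 * N / (q ^ 2 * log N) := by
  have hq0 : (0 : ℝ) < q := by exact_mod_cast hq
  have hN : 0 < N := by
    have := hq0.trans_le hqN
    rwa [div_pos_iff_of_pos_right hq0] at this
  have hsplit : log N = log q + log (N / q) := by rw [log_div hN.ne' hq0.ne']; ring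
  set ℓ := log (N / q)
  have hℓq : q * log 2 ≤ ℓ := by
    rw [← log_pow]; exact log_le_log (by positivity) h2q
  have hℓ : 0 < ℓ := lt_of_lt_of_le (by positivity) hℓq
  have hlogq : 0 ≤ log q := log_nonneg (by exact_mod_cast hq)
  have hL : log N ≤ 2 * ℓ := by linarith [log_le_log hq0 hqN]
  have hL0 : 0 < log N := by linarith
  have hq3 : 0.3 * (q : ℝ) ^ 3 ≤ ℓ ^ 3 :=
    calc 0.3 * (q : ℝ) ^ 3 ≤ log 2 ^ 3 * q ^ 3 := by gcongr; exact log_two_pow_three_gt.le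
      _ = (q * log 2) ^ 3 := by ring
      _ ≤ ℓ ^ 3 := by gcongr
  rw [show (q : ℝ) ^ 2 * (N / q / ℓ ^ 4) = q ^ 3 * N / (q ^ 2 * ℓ ^ 4) by field_simp,
    div_le_div_iff₀ (by positivity) (by positivity)]
  have : 0 ≤ N * q ^ 2 * ℓ ^ 4 := by positivity
  calc q ^ 3 * N * (q ^ 2 * log N) ≤ q ^ 3 * N * (q ^ 2 * (2 * ℓ)) := by gcongr
    _ = 20 / 3 * (0.3 * q ^ 3) * (N * q ^ 2 * ℓ) := by ring
    _ ≤ 20 / 3 * ℓ ^ 3 * (N * q ^ 2 * ℓ) := by gcongr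
    _ ≤ 7 * N * (q ^ 2 * ℓ ^ 4) := by linarith

lemma sq_mul_pow_div_log_pow_four_le {b N : ℝ} {q : ℕ} (hq : 1 ≤ q) (hb : 2 ≤ b)
    (hN : q * b ^ q < N) :
    (q : ℝ) ^ 2 * (b ^ q / log (b ^ q) ^ 4) ≤ 16 * N / (q ^ 2 * log N) := by
  have hq1 : (1 : ℝ) ≤ q := by exact_mod_cast hq
  have hB : 1 ≤ b ^ q := one_le_pow₀ (by linarith)
  have hqB : 1 ≤ q * b ^ q := one_le_mul_of_one_le_of_one_le hq1 hB
  have hlogb : log 2 ≤ log b := log_le_log (by norm_num) hb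
  have hlogb0 : 0 < log b := (log_pos (by norm_num)).trans_le hlogb
  have hL0 : 0 < log N := log_pos (by linarith)
  have hL : log N ≤ q * (1 + log b) + N / (q * b ^ q) := by
    have hsplit : log N = log q + q * log b + log (N / (q * b ^ q)) := by
      rw [log_div (by linarith) (by linarith), log_mul (by linarith) (by linarith), log_pow]
      ring
    have := log_le_sub_one_of_pos (by linarith : (0 : ℝ) < q)
    have := log_le_sub_one_of_pos (div_pos (by linarith) (by linarith) : 0 < N / (q * b ^ q))
    linarith
  have hBL : b ^ q * log N ≤ N * (2 + log b) :=
    calc b ^ q * log N ≤ b ^ q * (q * (1 + log b) + N / (q * b ^ q)) := by gcongr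
      _ = q * b ^ q * (1 + log b) + N / q := by field_simp
      _ ≤ N * (1 + log b) + N := by
        gcongr
        exact div_le_self (by linarith) hq1
      _ = N * (2 + log b) := by ring
  have hlogb4 : 2 + log b ≤ 16 * log b ^ 4 := by
    have : 0.3 ≤ log b ^ 3 := log_two_pow_three_gt.le.trans (by gcongr)
    nlinarith [log_two_gt_d9]
  rw [log_pow, mul_pow,
    show (q : ℝ) ^ 2 * (b ^ q / (q ^ 4 * log b ^ 4)) = b ^ q / (q ^ 2 * log b ^ 4) by field_simp,
    div_le_div_iff₀ (by positivity) (by positivity)]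
  calc b ^ q * (q ^ 2 * log N) = q ^ 2 * (b ^ q * log N) := by ring
    _ ≤ q ^ 2 * (N * (16 * log b ^ 4)) :=
      mul_le_mul_of_nonneg_left (hBL.trans (mul_le_mul_of_nonneg_left hlogb4 (by linarith)))
        (sq_nonneg _)
    _ = 16 * N * (q ^ 2 * log b ^ 4) := by ring

lemma sq_mul_add_div_log_pow_four_le {b N : ℝ} {q : ℕ} (hq : 1 ≤ q) (hb : 2 ≤ b)
    (hN : q * b ^ q < N) :
    (q : ℝ) ^ 2 * (N / q / log (N / q) ^ 4 + b ^ q / log (b ^ q) ^ 4) ≤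
      23 * N / (q ^ 2 * log N) := by
  have hq0 : (0 : ℝ) < q := by exact_mod_cast hq
  have h2X : (2 : ℝ) ^ q ≤ N / q :=
    (pow_le_pow_left₀ zero_le_two hb q).trans ((le_div_iff₀ hq0).mpr (by linarith))
  have hqX : (q : ℝ) ≤ N / q :=
    le_trans (by exact_mod_cast (Nat.lt_two_pow_self (n := q)).le) h2X
  rw [mul_add, show 23 * N / (q ^ 2 * log N) = 7 * N / (q ^ 2 * log N) + 16 * N / (q ^ 2 * log N)
    by ring]
  exact add_le_add (sq_mul_div_log_pow_four_le hq h2X hqX)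
    (sq_mul_pow_div_log_pow_four_le hq hb hN)

theorem stmt_19 :
    ∀ C : ℝ, 0 < C → ∃ C' : ℝ, 0 < C' ∧
      ∀ b q : ℕ, 2 ≤ b → q.Prime → ¬ q ∣ b →
      ∀ N : ℝ, (q : ℝ) * (b : ℝ) ^ q < N →
      -- Siegel–Walfisz type hypothesis, uniform in residues coprime to q(q-1)
      (∀ x : ℝ, 2 ≤ x → ∀ r : ℕ, r.Coprime (q * (q - 1)) →
        |(primePiMod x (q * (q - 1)) r : ℝ) -
            (primePi x : ℝ) / (Nat.totient (q * (q - 1)) : ℝ)| ≤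
          C * x / (Real.log x) ^ 4) →
      ∃ ε : ℕ → ℝ,
        (∀ k < q,
          ((Nat.card {p : ℕ | p.Prime ∧ b ^ q < p ∧ (p : ℝ) ≤ N / q ∧
              IsUnit ((p : ZMod (q * (q - 1)))) ∧
              (b : ZMod q) ^ (p : ZMod (q * (q - 1))).val =
                (k : ZMod q) * ((p : ZMod (q * (q - 1))).val : ZMod q) + (b : ZMod q)} : ℕ) : ℝ) =
            ((Nat.card {r : ZMod (q * (q - 1)) | IsUnit r ∧
              (b : ZMod q) ^ r.val =
                (k : ZMod q) * (r.val : ZMod q) + (b : ZMod q)} : ℕ) : ℝ) /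
              (Nat.totient (q * (q - 1)) : ℝ) *
              ((Nat.card {p : ℕ | p.Prime ∧ b ^ q < p ∧ (p : ℝ) ≤ N / q} : ℕ) : ℝ) + ε k) ∧
        ∑ k ∈ Finset.range q, |ε k| ≤ C' * N / ((q : ℝ) ^ 2 * Real.log N) := by
  intro C hC
  refine ⟨23 * C, by positivity, fun b q hb hq _ N hN hSW => ?_⟩
  set m := q * (q - 1)
  have : NeZero m := ⟨Nat.mul_ne_zero hq.ne_zero (by have := hq.two_le; omega)⟩
  have hb2 : (2 : ℝ) ≤ b := by exact_mod_cast hb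
  have hB : (2 : ℝ) ≤ (b : ℝ) ^ q := hb2.trans (le_self_pow₀ (by linarith) hq.ne_zero)
  have hBX : (b : ℝ) ^ q ≤ N / q := by rw [le_div_iff₀ (by exact_mod_cast hq.pos)]; nlinarith
  have hSWunit (x : ℝ) (hx : 2 ≤ x) (r : ZMod m) (hr : IsUnit r) :
      |(primePiMod x m r.val : ℝ) - primePi x / Nat.totient m| ≤ C * (x / log x ^ 4) := by
    rw [← mul_div_assoc]
    refine hSW x hx r.val ((ZMod.isUnit_iff_coprime _ _).mp ?_)
    rwa [ZMod.natCast_zmod_val]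
  simp only [card_setOf_prime_lt_le, card_setOf_prime_lt_le_and]
  simp only [Set.coe_ofPred, Nat.card_eq_fintype_card, Fintype.card_subtype, Nat.cast_pow]
  refine ⟨_, fun k _ => (add_sub_cancel _ _).symm, ?_⟩
  refine (sum_abs_card_filter_primes_sub_le (Dvd.intro _ rfl) hBX (hSWunit _ (hB.trans hBX))
    (hSWunit _ hB)).trans ?_
  have hm : (m : ℝ) ≤ q ^ 2 := by
    rw [sq]; exact_mod_cast Nat.mul_le_mul_left q (Nat.sub_le q 1)
  have hE : 0 ≤ C * (N / q / log (N / q) ^ 4) + C * (b ^ q / log (b ^ q) ^ 4) :=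
    add_nonneg ((abs_nonneg _).trans (hSWunit _ (hB.trans hBX) 1 isUnit_one))
      ((abs_nonneg _).trans (hSWunit _ hB 1 isUnit_one))
  calc _ ≤ (q : ℝ) ^ 2 * (C * (N / q / log (N / q) ^ 4) + C * (b ^ q / log (b ^ q) ^ 4)) :=
        mul_le_mul_of_nonneg_right hm hE
    _ = C * (q ^ 2 * (N / q / log (N / q) ^ 4 + b ^ q / log (b ^ q) ^ 4)) := by ring
    _ ≤ C * (23 * N / (q ^ 2 * log N)) := by
        gcongr
        exact sq_mul_add_div_log_pow_four_le hq.one_lt.le hb2 hN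
    _ = 23 * C * N / (q ^ 2 * log N) := by ring
end
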